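/- The number of 3-dimensional p×q×r matrices with nonnegative integer entries and 1-marginals λ, μ, ν (i.e., Σ_{j,k} a_{ijk} = λ_i, Σ_{i,k} a_{ijk} = μ_j, Σ_{i,j} a_{ijk} = ν_k) equals the inner product ⟨φ^λ ⊗ φ^μ ⊗ φ^ν, χ^(n)⟩ of characters of S_n. -/

import Mathlib

open Finset Equiv
open scoped Classical

noncomputable section

/-- Value at `g` of the permutation character of `S_n` induced from the trivial character of
the Young subgroup of the composition `c`: the number of colorings of `Fin n` with fiber
sizes given by `c` that are fixed by `g`. -/
def permChar (n : ℕ) (c : ℕ → ℕ) (g : Perm (Fin n)) : ℚ :=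
  Nat.card {f : Fin n → ℕ // (∀ k, Nat.card {x : Fin n // f x = k} = c k) ∧ ∀ x, f (g x) = f x}

/-- Inner product of class functions (real-valued characters) of `S_n`. -/
def innerChar (n : ℕ) (χ ψ : Perm (Fin n) → ℚ) : ℚ :=
  (∑ g : Perm (Fin n), χ g * ψ g) / (n.factorial : ℚ)

/-- The trivial character `χ^{(n)}` of `S_n`. -/
def trivChar (n : ℕ) : Perm (Fin n) → ℚ := fun _ => 1

/-- The sign character `χ^{(1^n)}` of `S_n`. -/
def signChar (n : ℕ) : Perm (Fin n) → ℚ := fun g => ((Perm.sign g : ℤ) : ℚ)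

/-- Permutation character for an integer vector: zero if some entry is negative. -/
def permCharZ (n : ℕ) (c : ℕ → ℤ) (g : Perm (Fin n)) : ℚ :=
  if ∀ k, 0 ≤ c k then permChar n (fun k => (c k).toNat) g else 0

/-- The irreducible character `χ^a` of `S_n` indexed by the partition `a`, given by the
Jacobi–Trudi determinantal formula `χ^a = ∑_σ sgn(σ) φ^{(a_i - i + σ(i))_i}`. -/
def irrChar (n : ℕ) (a : ℕ → ℕ) (g : Perm (Fin n)) : ℚ :=
  ∑ σ : Perm (Fin n), ((Perm.sign σ : ℤ) : ℚ) *
    permCharZ n (fun i => if h : i < n then (a i : ℤ) - i + ((σ ⟨i, h⟩ : Fin n) : ℕ) else 0) g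

/-- Kronecker coefficient `k(a,b,c) = ⟨χ^a ⊗ χ^b, χ^c⟩`. -/
def kron (n : ℕ) (a b c : ℕ → ℕ) : ℚ :=
  innerChar n (fun g => irrChar n a g * irrChar n b g) (irrChar n c)

/-- Extend a vector indexed by `Fin p` to `ℕ` by zeros. -/
def extc {p : ℕ} (l : Fin p → ℕ) : ℕ → ℕ := fun i => if h : i < p then l ⟨i, h⟩ else 0

/-- Dominance order: `a ⊵ b`. -/
def Dominates (a b : ℕ → ℕ) : Prop :=
  ∀ k, ∑ i ∈ Finset.range k, b i ≤ ∑ i ∈ Finset.range k, a i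

/-- Conjugate (transpose) of a partition with at most `n` parts. -/
def conjFun (n : ℕ) (a : ℕ → ℕ) : ℕ → ℕ :=
  fun j => ((Finset.range n).filter (fun i => j < a i)).card

/-- `a` is a partition of `n` (weakly decreasing, supported on the first `n` parts). -/
def IsPartitionFun (n : ℕ) (a : ℕ → ℕ) : Prop :=
  (∀ i j, i ≤ j → a j ≤ a i) ∧ (∀ i, n ≤ i → a i = 0) ∧ ∑ i ∈ Finset.range n, a i = n

/-- The weakly decreasing sequence of parts of `P : Nat.Partition n`. -/
def pf {n : ℕ} (P : n.Partition) : ℕ → ℕ :=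
  fun i => ((P.parts.sort (· ≤ ·)).reverse).getD i 0

/-- The parts of `P : Nat.Partition n` as a vector of length `n`. -/
def pfin {n : ℕ} (P : n.Partition) : Fin n → ℕ := fun k => pf P k

/-- Number of cells of the skew shape `a/b` where the filling `T` has entry `k`. -/
def skewContent (a b : ℕ → ℕ) (T : ℕ → ℕ → ℕ) (k : ℕ) : ℕ :=
  Nat.card {p : ℕ × ℕ // b p.1 ≤ p.2 ∧ p.2 < a p.1 ∧ T p.1 p.2 = k}

/-- Number of cells of the skew shape `a/b`. -/
def skewSize (a b : ℕ → ℕ) : ℕ :=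
  Nat.card {p : ℕ × ℕ // b p.1 ≤ p.2 ∧ p.2 < a p.1}

/-- `T` is a semistandard filling of the shape `a` (zero outside, rows weakly increasing,
columns strictly increasing). -/
def IsSSYT (a : ℕ → ℕ) (T : ℕ → ℕ → ℕ) : Prop :=
  (∀ i j, a i ≤ j → T i j = 0) ∧
  (∀ i j₁ j₂, j₁ ≤ j₂ → j₂ < a i → T i j₁ ≤ T i j₂) ∧
  (∀ i₁ i₂ j, i₁ < i₂ → j < a i₂ → T i₁ j < T i₂ j)

/-- The Kostka number: the number of semistandard Young tableaux of shape `a`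
and content `c`. -/
def kostka (a c : ℕ → ℕ) : ℕ :=
  Nat.card {T : ℕ → ℕ → ℕ // IsSSYT a T ∧ ∀ k, skewContent a (fun _ => 0) T k = c k}

/-- Number of entries equal to `k` in the prefix of the (right-to-left, top-to-bottom)
reading word of `T` ending at position `(i,j)`. -/
def lrCount (a b : ℕ → ℕ) (T : ℕ → ℕ → ℕ) (i j k : ℕ) : ℕ :=
  Nat.card {p : ℕ × ℕ //
    (p.1 < i ∨ (p.1 = i ∧ j ≤ p.2)) ∧ b p.1 ≤ p.2 ∧ p.2 < a p.1 ∧ T p.1 p.2 = k}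

/-- `T` is a Littlewood–Richardson skew tableau of shape `a/b`: semistandard and its
reverse reading word is a lattice word. -/
def IsLR (a b : ℕ → ℕ) (T : ℕ → ℕ → ℕ) : Prop :=
  (∀ i j, ¬(b i ≤ j ∧ j < a i) → T i j = 0) ∧
  (∀ i j₁ j₂, b i ≤ j₁ → j₁ ≤ j₂ → j₂ < a i → T i j₁ ≤ T i j₂) ∧
  (∀ i₁ i₂ j, i₁ < i₂ → b i₁ ≤ j → j < a i₁ → b i₂ ≤ j → j < a i₂ → T i₁ j < T i₂ j) ∧
  (∀ i j k, lrCount a b T i j (k + 1) ≤ lrCount a b T i j k)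

/-- A Littlewood–Richardson multitableau of shape `α` with `r` parts: a chain of
partitions `0 = α(0) ⊆ α(1) ⊆ ⋯ ⊆ α(r) = α` together with Littlewood–Richardson
fillings of the successive skew shapes. -/
structure LRMultiF (r : ℕ) (α : ℕ → ℕ) where
  chain : Fin (r + 1) → ℕ → ℕ
  antitone : ∀ k i j, i ≤ j → chain k j ≤ chain k i
  zero : ∀ i, chain 0 i = 0
  last : ∀ i, chain (Fin.last r) i = α i
  mono : ∀ (k : Fin r) (i : ℕ), chain k.castSucc i ≤ chain k.succ i
  T : Fin r → ℕ → ℕ → ℕ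
  lr : ∀ k : Fin r, IsLR (chain k.succ) (chain k.castSucc) (T k)

/-- Content of the `k`-th tableau of a Littlewood–Richardson multitableau. -/
def LRMultiF.cont {r : ℕ} {α : ℕ → ℕ} (M : LRMultiF r α) (k : Fin r) : ℕ → ℕ :=
  skewContent (M.chain k.succ) (M.chain k.castSucc) (M.T k)

/-- Size of the `k`-th tableau of a Littlewood–Richardson multitableau. -/
def LRMultiF.size {r : ℕ} {α : ℕ → ℕ} (M : LRMultiF r α) (k : Fin r) : ℕ :=
  skewSize (M.chain k.succ) (M.chain k.castSucc)

/-- `LR(α,β;ν)`: pairs of Littlewood–Richardson multitableaux of shapes `α`, `β`,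
type `ν`, with equal contents. -/
def LRPairs (r : ℕ) (α β : ℕ → ℕ) (ν : Fin r → ℕ) :=
  {TS : LRMultiF r α × LRMultiF r β //
    (∀ k, TS.1.size k = ν k) ∧ (∀ k, TS.2.size k = ν k) ∧ ∀ k, TS.1.cont k = TS.2.cont k}

/-- `LR*(α,β;ν)`: pairs of Littlewood–Richardson multitableaux of shapes `α`, `β`,
type `ν`, with termwise conjugate contents. -/
def LRPairsStar (n r : ℕ) (α β : ℕ → ℕ) (ν : Fin r → ℕ) :=
  {TS : LRMultiF r α × LRMultiF r β //
    (∀ k, TS.1.size k = ν k) ∧ (∀ k, TS.2.size k = ν k) ∧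
      ∀ k m, TS.2.cont k m = conjFun n (TS.1.cont k) m}

/-- `lr(α,β;ν)`. -/
def lrNum (r : ℕ) (α β : ℕ → ℕ) (ν : Fin r → ℕ) : ℕ := Nat.card (LRPairs r α β ν)

/-- `lr*(α,β;ν)`. -/
def lrStarNum (n r : ℕ) (α β : ℕ → ℕ) (ν : Fin r → ℕ) : ℕ :=
  Nat.card (LRPairsStar n r α β ν)

/-- A semistandard Young tableau (of arbitrary partition shape). -/
structure SSYTP where
  shape : ℕ → ℕ
  T : ℕ → ℕ → ℕ
  antitone : ∀ i j, i ≤ j → shape j ≤ shape i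
  finite : ∃ N, ∀ i, N ≤ i → shape i = 0
  ssyt : IsSSYT shape T

/-- Content of a semistandard Young tableau. -/
def SSYTP.cont (P : SSYTP) : ℕ → ℕ := skewContent P.shape (fun _ => 0) P.T

/-- The multiset of entries of a matrix. -/
def entriesM {p q : ℕ} (A : Fin p → Fin q → ℕ) : Multiset ℕ :=
  (Finset.univ : Finset (Fin p × Fin q)).val.map (fun ij => A ij.1 ij.2)

/-- The π-sequence of `A` is the partition `ν` (the weakly decreasing rearrangement of
the entries of `A` is `ν`). -/
def HasPiSeq {p q : ℕ} (A : Fin p → Fin q → ℕ) {n : ℕ} (ν : n.Partition) : Prop :=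
  (entriesM A).filter (· ≠ 0) = ν.parts

end

/-!
A triple of colorings of `{1, …, n}` with fiber sizes `λ`, `μ`, `ν` is a single map
`F : Fin n → [p] × [q] × [r]`, and `φ^λ(g) φ^μ(g) φ^ν(g)` counts those `F` fixed by `g`.
By Burnside's lemma the inner product with the trivial character is therefore the number of
`S_n`-orbits of such maps. Two maps lie in the same orbit iff they have the same fiber sizes, and
the fiber sizes `a_{ijk} = #F⁻¹(i, j, k)` of `F` range exactly over the 3-dimensional tables with
1-marginals `λ`, `μ`, `ν`.
-/

open MulAction

attribute [local instance] arrowAction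

theorem sum_card_fixedBy_div_card_eq_card_orbits (G X : Type*) [Group G] [MulAction G X]
    [Fintype G] [Finite X] :
    (∑ g : G, (Nat.card (fixedBy X g) : ℚ)) / Nat.card G = Nat.card (orbitRel.Quotient G X) := by
  have := Fintype.ofFinite X
  have : ∀ g : G, Fintype (fixedBy X g) := fun _ => Fintype.ofFinite _
  have := Fintype.ofFinite (orbitRel.Quotient G X)
  have hG : (Nat.card G : ℚ) ≠ 0 := Nat.cast_ne_zero.mpr Nat.card_pos.ne'
  rw [div_eq_iff hG]
  simp only [Nat.card_eq_fintype_card]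
  exact_mod_cast sum_card_fixedBy_eq_card_orbits_mul_card_group G X

section Colorings

variable {α β : Type*}

noncomputable def fiberCard (f : α → β) (b : β) : ℕ := Nat.card {a // f a = b}

theorem fiberCard_comp_equiv (f : α → β) (σ : α ≃ α) : fiberCard (f ∘ σ) = fiberCard f :=
  funext fun _ => Nat.card_congr (σ.subtypeEquiv fun _ => Iff.rfl)

theorem perm_smul_eq_comp (σ : Perm α) (F : α → β) : σ • F = F ∘ ⇑σ⁻¹ := rfl

theorem perm_smul_eq_self_iff (σ : Perm α) (F : α → β) : σ • F = F ↔ F ∘ σ = F := by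
  rw [perm_smul_eq_comp, Perm.inv_def, comp_symm_eq, eq_comm]

theorem exists_perm_comp_eq_of_fiberCard_eq [Finite α] {f g : α → β}
    (h : fiberCard f = fiberCard g) : ∃ σ : Perm α, g ∘ σ = f := by
  have e : ∀ b, {a // f a = b} ≃ {a // g a = b} :=
    fun b => (Finite.card_eq.mp (congrFun h b)).some
  exact ⟨Equiv.ofFiberEquiv e, funext (Equiv.ofFiberEquiv_map e)⟩

theorem exists_fiberCard_eq [Fintype β] {n : ℕ} (c : β → ℕ) (h : ∑ b, c b = n) :
    ∃ f : Fin n → β, fiberCard f = c := by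
  let e : Fin n ≃ Σ b, Fin (c b) := (Fintype.equivFinOfCardEq (by simp [h])).symm
  refine ⟨fun a => (e a).1, funext fun b => ?_⟩
  calc fiberCard (fun a => (e a).1) b = Nat.card {s : Σ b, Fin (c b) // s.1 = b} :=
        Nat.card_congr (e.subtypeEquiv fun _ => Iff.rfl)
    _ = c b := by rw [Nat.card_congr (Equiv.sigmaSubtype b), Nat.card_eq_fintype_card,
        Fintype.card_fin]

variable (α) in
def colorings (S : Set (β → ℕ)) : SubMulAction (Perm α) (α → β) where
  carrier := fiberCard ⁻¹' S
  smul_mem' σ F hF := by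
    rwa [Set.mem_preimage, perm_smul_eq_comp, fiberCard_comp_equiv]

theorem mem_orbit_colorings_iff [Finite α] {S : Set (β → ℕ)} (F G : colorings α S) :
    F ∈ orbit (Perm α) G ↔ fiberCard F.1 = fiberCard G.1 := by
  constructor
  · rintro ⟨σ, rfl⟩
    change fiberCard (σ • G).1 = _
    rw [SubMulAction.val_smul, perm_smul_eq_comp, fiberCard_comp_equiv]
  · intro h
    obtain ⟨σ, hσ⟩ := exists_perm_comp_eq_of_fiberCard_eq h
    refine ⟨σ⁻¹, Subtype.ext ?_⟩
    rw [SubMulAction.val_smul, perm_smul_eq_comp, inv_inv, hσ]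

theorem card_orbits_colorings [Finite α] {S : Set (β → ℕ)}
    (hS : S ⊆ Set.range (fiberCard (α := α))) :
    Nat.card (orbitRel.Quotient (Perm α) (colorings α S)) = Nat.card S := by
  let c : colorings α S → S := fun F => ⟨fiberCard F.1, F.2⟩
  have hc : Function.Surjective c := by
    rintro ⟨s, hs⟩
    obtain ⟨F, rfl⟩ := hS hs
    exact ⟨⟨F, hs⟩, rfl⟩
  exact Nat.card_congr ((Quotient.congrRight fun F G =>
    (orbitRel_apply.trans (mem_orbit_colorings_iff F G)).trans
      (Setoid.ker_def.trans Subtype.ext_iff).symm).trans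
      (Setoid.quotientKerEquivOfSurjective c hc))

theorem mem_fixedBy_colorings_iff {S : Set (β → ℕ)} (g : Perm α)
    (F : colorings α S) : F ∈ fixedBy (colorings α S) g ↔ F.1 ∘ g = F.1 := by
  rw [mem_fixedBy, Subtype.ext_iff, SubMulAction.val_smul, perm_smul_eq_self_iff]

theorem fiberCard_fst_comp {γ : Type*} [Finite α] [Fintype γ] (F : α → β × γ) (b : β) :
    fiberCard (Prod.fst ∘ F) b = ∑ c, fiberCard F (b, c) := by
  simp only [fiberCard]
  rw [← Nat.card_sigma]
  exact Nat.card_congr ((Equiv.sigmaFiberEquiv fun a : {a // (F a).1 = b} => (F a).2).symm.trans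
    (Equiv.sigmaCongrRight fun c =>
      (Equiv.subtypeSubtypeEquivSubtypeInter (fun a => (F a).1 = b) (fun a => (F a).2 = c)).trans
      (Equiv.subtypeEquivRight fun a => by simp [Prod.ext_iff])))

theorem fiberCard_snd_comp {γ : Type*} [Finite α] [Fintype β] (F : α → β × γ) (c : γ) :
    fiberCard (Prod.snd ∘ F) c = ∑ b, fiberCard F (b, c) := by
  simp only [fiberCard]
  rw [← Nat.card_sigma]
  exact Nat.card_congr ((Equiv.sigmaFiberEquiv fun a : {a // (F a).2 = c} => (F a).1).symm.trans
    (Equiv.sigmaCongrRight fun b =>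
      (Equiv.subtypeSubtypeEquivSubtypeInter (fun a => (F a).2 = c) (fun a => (F a).1 = b)).trans
      (Equiv.subtypeEquivRight fun a => by simp [Prod.ext_iff, and_comm])))

end Colorings

section Marginals

variable {α : Type*} {p q r : ℕ}

theorem extc_injective : Function.Injective (extc : (Fin p → ℕ) → ℕ → ℕ) :=
  fun a b h => funext fun i => by simpa [extc] using congrFun h i

theorem fiberCard_val_comp (f : α → Fin p) : fiberCard (Fin.val ∘ f) = extc (fiberCard f) := by
  funext k
  unfold extc
  split_ifs with hk
  · exact Nat.card_congr (Equiv.subtypeEquivRight fun a => by simp [Fin.ext_iff])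
  · have : IsEmpty {a // (Fin.val ∘ f) a = k} := ⟨fun a => hk (a.2 ▸ (f a.1).isLt)⟩
    exact Nat.card_of_isEmpty

theorem lt_of_fiberCard_eq_extc [Finite α] {l : Fin p → ℕ} {f : α → ℕ}
    (h : fiberCard f = extc l) (a : α) : f a < p := by
  by_contra hp
  have : Nonempty {x // f x = f a} := ⟨⟨a, rfl⟩⟩
  have hpos : 0 < fiberCard f (f a) := Nat.card_pos
  simp [h, extc, hp] at hpos

theorem permChar_extc {n : ℕ} (l : Fin p → ℕ) (g : Perm (Fin n)) :
    permChar n (extc l) g = Nat.card {f : Fin n → Fin p // fiberCard f = l ∧ f ∘ g = f} :=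
  congrArg _ <| Nat.card_congr
    { toFun := fun f => ⟨fun x => ⟨f.1 x, lt_of_fiberCard_eq_extc (funext f.2.1) x⟩,
        extc_injective (by rw [← fiberCard_val_comp]; exact funext f.2.1),
        funext fun x => Fin.ext (f.2.2 x)⟩
      invFun := fun f => ⟨Fin.val ∘ f.1,
        fun k => (congrFun (fiberCard_val_comp f.1) k).trans (congrArg (extc · k) f.2.1),
        fun x => congrArg Fin.val (congrFun f.2.2 x)⟩
      left_inv := fun _ => rfl
      right_inv := fun _ => rfl }

def withMarginals (l : Fin p → ℕ) (m : Fin q → ℕ) (ν : Fin r → ℕ) :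
    Set (Fin p × Fin q × Fin r → ℕ) :=
  {c | (∀ i, ∑ j, ∑ k, c (i, j, k) = l i) ∧ (∀ j, ∑ i, ∑ k, c (i, j, k) = m j) ∧
    (∀ k, ∑ i, ∑ j, c (i, j, k) = ν k)}

variable {l : Fin p → ℕ} {m : Fin q → ℕ} {ν : Fin r → ℕ}

theorem fiberCard_mem_withMarginals_iff [Finite α] (F : α → Fin p × Fin q × Fin r) :
    fiberCard F ∈ withMarginals l m ν ↔ fiberCard (Prod.fst ∘ F) = l ∧
      fiberCard (Prod.fst ∘ Prod.snd ∘ F) = m ∧ fiberCard (Prod.snd ∘ Prod.snd ∘ F) = ν := by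
  simp only [withMarginals, Set.mem_ofPred_eq, funext_iff, fiberCard_fst_comp, fiberCard_snd_comp,
    Fintype.sum_prod_type]
  refine and_congr Iff.rfl (and_congr (forall_congr' fun j => ?_) (forall_congr' fun k => ?_)) <;>
    rw [Finset.sum_comm]

theorem withMarginals_subset_range_fiberCard {n : ℕ} (hl : ∑ i, l i = n) :
    withMarginals l m ν ⊆ Set.range (fiberCard (α := Fin n)) := fun c hc =>
  exists_fiberCard_eq c (by simp only [Fintype.sum_prod_type, hc.1, hl])

noncomputable def fixedByColoringsEquiv [Finite α] (g : Perm α) :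
    fixedBy (colorings α (withMarginals l m ν)) g ≃
      {f : α → Fin p // fiberCard f = l ∧ f ∘ g = f} ×
      {f : α → Fin q // fiberCard f = m ∧ f ∘ g = f} ×
      {f : α → Fin r // fiberCard f = ν ∧ f ∘ g = f} where
  toFun x :=
    have hF := (fiberCard_mem_withMarginals_iff x.1.1).1 x.1.2
    have hg := (mem_fixedBy_colorings_iff g x.1).1 x.2
    (⟨Prod.fst ∘ x.1.1, hF.1, congrArg (Prod.fst ∘ ·) hg⟩,
      ⟨Prod.fst ∘ Prod.snd ∘ x.1.1, hF.2.1, congrArg (Prod.fst ∘ Prod.snd ∘ ·) hg⟩,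
      ⟨Prod.snd ∘ Prod.snd ∘ x.1.1, hF.2.2, congrArg (Prod.snd ∘ Prod.snd ∘ ·) hg⟩)
  invFun f :=
    ⟨⟨fun a => (f.1.1 a, f.2.1.1 a, f.2.2.1 a),
      (fiberCard_mem_withMarginals_iff _).2 ⟨f.1.2.1, f.2.1.2.1, f.2.2.2.1⟩⟩,
      (mem_fixedBy_colorings_iff g _).2 <| funext fun a =>
        Prod.ext (congrFun f.1.2.2 a) (Prod.ext (congrFun f.2.1.2.2 a) (congrFun f.2.2.2.2 a))⟩
  left_inv _ := rfl
  right_inv _ := rfl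

end Marginals

theorem stmt4_general (n p q r : ℕ) (l : Fin p → ℕ) (m : Fin q → ℕ) (ν : Fin r → ℕ)
    (hl : ∑ i, l i = n) :
    (Nat.card {A : Fin p → Fin q → Fin r → ℕ //
        (∀ i, ∑ j, ∑ k, A i j k = l i) ∧ (∀ j, ∑ i, ∑ k, A i j k = m j) ∧
        (∀ k, ∑ i, ∑ j, A i j k = ν k)} : ℚ) =
      innerChar n
        (fun g => permChar n (extc l) g * permChar n (extc m) g * permChar n (extc ν) g)
        (trivChar n) := by
  let X := colorings (Fin n) (withMarginals l m ν)
  have hfixed : ∀ g : Perm (Fin n),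
      permChar n (extc l) g * permChar n (extc m) g * permChar n (extc ν) g =
        Nat.card (fixedBy X g) := fun g => by
    rw [permChar_extc, permChar_extc, permChar_extc, Nat.card_congr (fixedByColoringsEquiv g),
      Nat.card_prod, Nat.card_prod]
    push_cast
    ring
  have hcard : (Nat.card (Perm (Fin n)) : ℚ) = n.factorial := by rw [Nat.card_perm, Nat.card_fin]
  let uncurry : (Fin p → Fin q → Fin r → ℕ) ≃ (Fin p × Fin q × Fin r → ℕ) :=
    ((Equiv.curry _ _ _).trans (Equiv.piCongrRight fun _ => Equiv.curry _ _ _)).symm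
  calc _ = (Nat.card (withMarginals l m ν) : ℚ) :=
        congrArg _ (Nat.card_congr (uncurry.subtypeEquiv fun _ => Iff.rfl))
    _ = Nat.card (orbitRel.Quotient (Perm (Fin n)) X) := by
        rw [card_orbits_colorings (withMarginals_subset_range_fiberCard hl)]
    _ = _ := by
        rw [← sum_card_fixedBy_div_card_eq_card_orbits, hcard, innerChar]
        simp only [trivChar, mul_one, hfixed]

/-- Snapper: the number of `p × q × r` nonnegative integer matrices with
1-marginals `l`, `m`, `ν` equals `⟨φ^l ⊗ φ^m ⊗ φ^ν, χ^{(n)}⟩`. -/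
theorem stmt4 (n p q r : ℕ) (l : Fin p → ℕ) (m : Fin q → ℕ) (ν : Fin r → ℕ)
    (hl : ∑ i, l i = n) (hm : ∑ j, m j = n) (hν : ∑ k, ν k = n) :
    (Nat.card {A : Fin p → Fin q → Fin r → ℕ //
        (∀ i, ∑ j, ∑ k, A i j k = l i) ∧ (∀ j, ∑ i, ∑ k, A i j k = m j) ∧
        (∀ k, ∑ i, ∑ j, A i j k = ν k)} : ℚ) =
      innerChar n
        (fun g => permChar n (extc l) g * permChar n (extc m) g * permChar n (extc ν) g)
        (trivChar n) :=
  stmt4_general n p q r l m ν hl
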